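/- Let F, G : Ω → ℂᴺ be holomorphic maps on a connected open set Ω ⊆ ℂⁿ containing 0 such that ‖F(z)‖² = ‖G(z)‖² for all z ∈ Ω. Then there exists a unitary transformation U of ℂᴺ with F = U ∘ G on Ω. -/

import Mathlib

noncomputable section
open Metric Set

/-- An automorphism of the unit ball of `EuclideanSpace ℂ ι`: a holomorphic self-map of the
ball with a holomorphic inverse. -/
def IsBallAut {ι : Type} [Fintype ι] (ψ : EuclideanSpace ℂ ι → EuclideanSpace ℂ ι) : Prop :=
  DifferentiableOn ℂ ψ (ball (0 : EuclideanSpace ℂ ι) 1) ∧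
    MapsTo ψ (ball (0 : EuclideanSpace ℂ ι) 1) (ball (0 : EuclideanSpace ℂ ι) 1) ∧
    ∃ φ : EuclideanSpace ℂ ι → EuclideanSpace ℂ ι,
      DifferentiableOn ℂ φ (ball (0 : EuclideanSpace ℂ ι) 1) ∧
      MapsTo φ (ball (0 : EuclideanSpace ℂ ι) 1) (ball (0 : EuclideanSpace ℂ ι) 1) ∧
      (∀ z ∈ ball (0 : EuclideanSpace ℂ ι) 1, φ (ψ z) = z) ∧
      (∀ z ∈ ball (0 : EuclideanSpace ℂ ι) 1, ψ (φ z) = z)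

/-!
On a complex line through a point of `Ω`, the function
`(z, μ) ↦ ⟪F (conj μ), F z⟫ - ⟪G (conj μ), G z⟫` is holomorphic in both variables and vanishes on
the totally real set `μ = conj z`. The substitution `(z, μ) = (a + i b, a - i b)` turns that set
into `ℝ²`, so two applications of the one-variable identity theorem make it vanish identically.
Hence the kernels `⟪F z, F w⟫` and `⟪G z, G w⟫` agree near the diagonal, and then on all of
`Ω × Ω` by the identity theorem. Equal Gram kernels give a linear isometry from the span of
`G(Ω)` onto that of `F(Ω)`, which extends to a unitary map of `ℂᴺ`.
-/

open Complex Filter Topology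
open scoped InnerProductSpace ComplexConjugate

theorem DifferentiableOn.eqOn_zero_of_eq_zero_on_reals {E : Type*} [NormedAddCommGroup E]
    [NormedSpace ℂ E] [CompleteSpace E] {f : ℂ → E} {U : Set ℂ} (hf : DifferentiableOn ℂ f U)
    (hU : IsOpen U) (hU' : IsPreconnected U) {x₀ : ℝ} (hx₀ : (x₀ : ℂ) ∈ U)
    (hreal : ∀ x : ℝ, (x : ℂ) ∈ U → f x = 0) : EqOn f 0 U := by
  refine (hf.analyticOnNhd hU).eqOn_zero_of_preconnected_of_frequently_eq_zero hU' hx₀ ?_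
  have hofReal : Tendsto ((↑) : ℝ → ℂ) (𝓝[≠] x₀) (𝓝[≠] (x₀ : ℂ)) :=
    continuous_ofReal.continuousWithinAt.tendsto_nhdsWithin fun x hx => by simpa using hx
  refine hofReal.frequently (Eventually.frequently ?_)
  exact eventually_nhdsWithin_of_eventually_nhds <| eventually_of_mem
    (continuous_ofReal.continuousAt.preimage_mem_nhds (hU.mem_nhds hx₀)) hreal

theorem eq_zero_of_eq_zero_on_real_pairs {E : Type*} [NormedAddCommGroup E] [NormedSpace ℂ E]
    [CompleteSpace E] {g : ℂ → ℂ → E} {ρ : ℝ}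
    (hg₁ : ∀ b ∈ ball (0 : ℂ) ρ, DifferentiableOn ℂ (g · b) (ball 0 ρ))
    (hg₂ : ∀ a ∈ ball (0 : ℂ) ρ, DifferentiableOn ℂ (g a) (ball 0 ρ))
    (hreal : ∀ a b : ℝ, |a| < ρ → |b| < ρ → g a b = 0) {a b : ℂ} (ha : a ∈ ball 0 ρ)
    (hb : b ∈ ball 0 ρ) : g a b = 0 := by
  have h0 : ((0 : ℝ) : ℂ) ∈ ball (0 : ℂ) ρ := by simpa using pos_of_mem_ball ha
  have hrealb : ∀ b : ℝ, |b| < ρ → ∀ a ∈ ball (0 : ℂ) ρ, g a b = 0 := fun b hb =>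
    (hg₁ b (by simpa using hb)).eqOn_zero_of_eq_zero_on_reals isOpen_ball
      (convex_ball _ _).isPreconnected h0 fun x hx => hreal x b (by simpa using hx) hb
  exact (hg₂ a ha).eqOn_zero_of_eq_zero_on_reals isOpen_ball (convex_ball _ _).isPreconnected h0
    (fun x hx => hrealb x (by simpa using hx) a ha) hb

theorem eq_zero_of_eq_zero_on_conj_diag {E : Type*} [NormedAddCommGroup E] [NormedSpace ℂ E]
    [CompleteSpace E] {h : ℂ × ℂ → E} {R : ℝ} (hh : DifferentiableOn ℂ h (ball 0 R))
    (hdiag : ∀ z : ℂ, ‖z‖ < R → h (z, conj z) = 0) {z w : ℂ} (hz : ‖z‖ < R / 2)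
    (hw : ‖w‖ < R / 2) : h (z, w) = 0 := by
  set ℓ : ℂ → ℂ → ℂ × ℂ := fun a b => (a + I * b, a - I * b)
  have hℓ : ∀ a ∈ ball (0 : ℂ) (R / 2), ∀ b ∈ ball (0 : ℂ) (R / 2), ℓ a b ∈ ball 0 R := by
    intro a ha b hb
    rw [mem_ball_zero_iff] at ha hb
    have hIb : ‖I * b‖ = ‖b‖ := by simp
    simp only [ℓ, mem_ball_zero_iff, Prod.norm_def, max_lt_iff]
    constructor
    · linarith [norm_add_le a (I * b)]
    · linarith [norm_sub_le a (I * b)]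
  have hreal : ∀ a b : ℝ, |a| < R / 2 → |b| < R / 2 → h (ℓ a b) = 0 := by
    intro a b ha hb
    have : ℓ a b = ((a : ℂ) + I * b, conj ((a : ℂ) + I * b)) := by
      simp only [ℓ, map_add, map_mul, conj_ofReal, conj_I]; ring_nf
    rw [this]
    apply hdiag
    calc ‖(a : ℂ) + I * b‖ ≤ |a| + |b| := by simpa using norm_add_le (a : ℂ) (I * b)
      _ < R := by linarith
  have hzw : ℓ ((z + w) / 2) ((z - w) / (2 * I)) = (z, w) := by
    simp only [ℓ, Prod.mk.injEq]
    constructor <;> field_simp <;> ring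
  rw [← hzw]
  refine eq_zero_of_eq_zero_on_real_pairs (g := fun a b => h (ℓ a b))
    (fun b hb => hh.comp (by fun_prop) fun a ha => hℓ a ha b hb)
    (fun a ha => hh.comp (by fun_prop) fun b hb => hℓ a ha b hb) hreal ?_ ?_ <;>
    rw [mem_ball_zero_iff]
  · calc ‖(z + w) / 2‖ ≤ (‖z‖ + ‖w‖) / 2 := by
          rw [norm_div, Complex.norm_two]; gcongr; exact norm_add_le z w
      _ < R / 2 := by linarith
  · calc ‖(z - w) / (2 * I)‖ ≤ (‖z‖ + ‖w‖) / 2 := by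
          rw [norm_div, norm_mul, Complex.norm_two, Complex.norm_I, mul_one]; gcongr
          exact norm_sub_le z w
      _ < R / 2 := by linarith

section IdentityTheorem

variable {E F : Type*} [NormedAddCommGroup E] [NormedSpace ℂ E] [NormedAddCommGroup F]
  [NormedSpace ℂ F] [CompleteSpace F] {f : E → F}

theorem DifferentiableOn.eqOn_zero_ball_of_eventuallyEq_zero {x : E} {r : ℝ}
    (hf : DifferentiableOn ℂ f (ball x r)) (hx : f =ᶠ[𝓝 x] 0) : EqOn f 0 (ball x r) := by
  intro y hy
  set ℓ : ℂ →ᵃ[ℂ] E := AffineMap.lineMap x y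
  have hℓd : Differentiable ℂ ℓ := fun t => AffineMap.hasDerivAt_lineMap.differentiableAt
  have hU : IsOpen (ℓ ⁻¹' ball x r) := isOpen_ball.preimage hℓd.continuous
  have h0 : (0 : ℂ) ∈ ℓ ⁻¹' ball x r := by
    simpa [ℓ] using mem_ball_self (x := x) (pos_of_mem_ball hy)
  have h1 : (1 : ℂ) ∈ ℓ ⁻¹' ball x r := by simpa [ℓ] using hy
  have hℓ0 : f ∘ ℓ =ᶠ[𝓝 0] 0 := by
    have := hℓd.continuous.tendsto 0
    rw [show ℓ 0 = x by simp [ℓ]] at this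
    exact this.eventually hx
  simpa [ℓ] using ((hf.comp hℓd.differentiableOn (mapsTo_preimage _ _)).analyticOnNhd hU)
    |>.eqOn_zero_of_preconnected_of_eventuallyEq_zero
      ((convex_ball x r).affine_preimage ⟨ℓ, ℓ.linear.restrictScalars ℝ, ℓ.map_vadd⟩).isPreconnected
      h0 hℓ0 h1

theorem DifferentiableOn.eqOn_zero_of_preconnected_of_eventuallyEq_zero {U : Set E} {z₀ : E}
    (hf : DifferentiableOn ℂ f U) (hU : IsOpen U) (hU' : IsPreconnected U) (h₀ : z₀ ∈ U)
    (hfz₀ : f =ᶠ[𝓝 z₀] 0) : EqOn f 0 U := by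
  suffices U ⊆ {z | f =ᶠ[𝓝 z] 0} from fun z hz => (this hz).self_of_nhds
  refine hU'.subset_of_closure_inter_subset isOpen_setOfPred_eventually_nhds ⟨z₀, h₀, hfz₀⟩ ?_
  rintro x ⟨hxW, hxU⟩
  obtain ⟨r, hr, hball⟩ := Metric.isOpen_iff.1 hU x hxU
  obtain ⟨y, hyW, hxy⟩ := Metric.mem_closure_iff.1 hxW (r / 2) (half_pos hr)
  have hsub : ball y (r / 2) ⊆ U :=
    (ball_subset_ball' (by rw [dist_comm]; linarith)).trans hball
  exact eventually_of_mem (isOpen_ball.mem_nhds (mem_ball.2 hxy))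
    ((hf.mono hsub).eqOn_zero_ball_of_eventuallyEq_zero hyW)

end IdentityTheorem

section Polarization

variable {ι : Type*} [Fintype ι]

theorem differentiableOn_inner_comp_conj {f : ℂ → EuclideanSpace ℂ ι} {R : ℝ}
    (hf : DifferentiableOn ℂ f (ball 0 R)) :
    DifferentiableOn ℂ (fun p : ℂ × ℂ => ⟪f (conj p.2), f p.1⟫_ℂ) (ball 0 R) := by
  have hfi : ∀ i, ∀ z : ℂ, ‖z‖ < R → DifferentiableAt ℂ (fun z => f z i) z := fun i z hz =>
    (EuclideanSpace.proj i : EuclideanSpace ℂ ι →L[ℂ] ℂ).differentiableAt.comp z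
      (hf.differentiableAt (isOpen_ball.mem_nhds (mem_ball_zero_iff.2 hz)))
  intro p hp
  rw [mem_ball_zero_iff, Prod.norm_def, max_lt_iff] at hp
  simp only [PiLp.inner_apply, RCLike.inner_apply]
  refine DifferentiableAt.differentiableWithinAt (DifferentiableAt.fun_sum fun i _ => ?_)
  refine ((hfi i p.1 hp.1).comp p differentiableAt_fst).mul ?_
  have := (hfi i (conj p.2) (by simpa using hp.2)).conj_conj
  rw [conj_conj] at this
  exact this.comp p differentiableAt_snd

theorem inner_eq_inner_of_norm_sq_eq_on_ball {f g : ℂ → EuclideanSpace ℂ ι} {R : ℝ}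
    (hf : DifferentiableOn ℂ f (ball 0 R)) (hg : DifferentiableOn ℂ g (ball 0 R))
    (hfg : ∀ z ∈ ball (0 : ℂ) R, ‖f z‖ ^ 2 = ‖g z‖ ^ 2) {z w : ℂ} (hz : ‖z‖ < R / 2)
    (hw : ‖w‖ < R / 2) : ⟪f w, f z⟫_ℂ = ⟪g w, g z⟫_ℂ := by
  have := eq_zero_of_eq_zero_on_conj_diag
    ((differentiableOn_inner_comp_conj hf).sub (differentiableOn_inner_comp_conj hg)) ?_ hz
    (w := conj w) (by simpa using hw)
  · simpa [sub_eq_zero] using this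
  · intro z hz
    simp only [Pi.sub_apply, conj_conj, inner_self_eq_norm_sq_to_K, sub_eq_zero]
    exact_mod_cast hfg z (mem_ball_zero_iff.2 hz)

variable {E : Type*} [NormedAddCommGroup E] [NormedSpace ℂ E] {Ω : Set E}
  {F G : E → EuclideanSpace ℂ ι}

theorem eventually_inner_eq_inner_of_norm_sq_eq (hΩ : IsOpen Ω)
    (hF : DifferentiableOn ℂ F Ω) (hG : DifferentiableOn ℂ G Ω)
    (hFG : ∀ z ∈ Ω, ‖F z‖ ^ 2 = ‖G z‖ ^ 2) {p : E} (hp : p ∈ Ω) :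
    ∀ᶠ z in 𝓝 p, ⟪F p, F z⟫_ℂ = ⟪G p, G z⟫_ℂ := by
  obtain ⟨r, hr, hball⟩ := Metric.isOpen_iff.1 hΩ p hp
  -- the disc of radius `3` is needed so that its half-radius disc still contains `t = 1`
  filter_upwards [ball_mem_nhds p (div_pos hr three_pos)] with z hz
  set ℓ : ℂ → E := fun t => p + t • (z - p)
  have hℓ : MapsTo ℓ (ball 0 3) Ω := by
    intro t ht
    apply hball
    rw [mem_ball_zero_iff] at ht
    rw [mem_ball, dist_eq_norm] at hz ⊢
    calc ‖ℓ t - p‖ = ‖t‖ * ‖z - p‖ := by simp [ℓ, norm_smul]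
      _ < 3 * (r / 3) := by gcongr
      _ = r := by ring
  have hℓd : DifferentiableOn ℂ ℓ (ball 0 3) := by fun_prop
  simpa [ℓ] using inner_eq_inner_of_norm_sq_eq_on_ball (hF.comp hℓd hℓ) (hG.comp hℓd hℓ)
    (fun t ht => hFG _ (hℓ ht)) (z := 1) (w := 0) (by norm_num) (by norm_num)

theorem inner_eq_inner_of_norm_sq_eq (hΩ : IsOpen Ω) (hΩ' : IsPreconnected Ω)
    (hF : DifferentiableOn ℂ F Ω) (hG : DifferentiableOn ℂ G Ω)
    (hFG : ∀ z ∈ Ω, ‖F z‖ ^ 2 = ‖G z‖ ^ 2) {z w : E} (hz : z ∈ Ω) (hw : w ∈ Ω) :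
    ⟪F z, F w⟫_ℂ = ⟪G z, G w⟫_ℂ := by
  have hd : DifferentiableOn ℂ (fun w => ⟪F z, F w⟫_ℂ - ⟪G z, G w⟫_ℂ) Ω :=
    ((innerSL ℂ (F z)).differentiable.comp_differentiableOn hF).sub
      ((innerSL ℂ (G z)).differentiable.comp_differentiableOn hG)
  refine sub_eq_zero.1 (hd.eqOn_zero_of_preconnected_of_eventuallyEq_zero hΩ hΩ' hz ?_ hw)
  exact (eventually_inner_eq_inner_of_norm_sq_eq hΩ hF hG hFG hz).mono fun w hw => sub_eq_zero.2 hw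

end Polarization

theorem exists_linearIsometryEquiv_apply_eq_of_inner_eq {𝕜 E κ : Type*} [RCLike 𝕜]
    [NormedAddCommGroup E] [InnerProductSpace 𝕜 E] [FiniteDimensional 𝕜 E] {u v : κ → E}
    (h : ∀ i j, ⟪u i, u j⟫_𝕜 = ⟪v i, v j⟫_𝕜) : ∃ U : E ≃ₗᵢ[𝕜] E, ∀ i, U (u i) = v i := by
  set A := Finsupp.linearCombination 𝕜 u
  set B := Finsupp.linearCombination 𝕜 v
  have hAB : ∀ c d, ⟪A c, A d⟫_𝕜 = ⟪B c, B d⟫_𝕜 := by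
    intro c d
    simp_rw [A, B, Finsupp.linearCombination_apply, Finsupp.sum_inner, Finsupp.inner_sum,
      inner_smul_left, inner_smul_right, h]
  have hker : LinearMap.ker A ≤ LinearMap.ker B := fun c hc => by
    rw [LinearMap.mem_ker, ← inner_self_eq_zero (𝕜 := 𝕜), ← hAB, LinearMap.mem_ker.1 hc,
      inner_zero_left]
  set T : LinearMap.range A →ₗ[𝕜] E := (LinearMap.ker A).liftQ B hker ∘ₗ A.quotKerEquivRange.symm
  have hT : ∀ c, T ⟨A c, LinearMap.mem_range_self A c⟩ = B c := fun c => by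
    simp [T, LinearMap.quotKerEquivRange_symm_apply_image]
  set L := T.isometryOfInner (by
    rintro ⟨_, c, rfl⟩ ⟨_, d, rfl⟩
    rw [hT, hT, Submodule.coe_inner, hAB])
  refine ⟨L.extend.toLinearIsometryEquiv rfl, fun i => ?_⟩
  have := L.extend_apply ⟨A (Finsupp.single i 1), LinearMap.mem_range_self A _⟩
  rw [show L _ = T _ from rfl, hT] at this
  simpa [A, B] using this

theorem stmt3_general {n N : ℕ} (Ω : Set (EuclideanSpace ℂ (Fin n)))
    (hΩopen : IsOpen Ω) (hΩconn : IsConnected Ω)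
    (F G : EuclideanSpace ℂ (Fin n) → EuclideanSpace ℂ (Fin N))
    (hF : DifferentiableOn ℂ F Ω) (hG : DifferentiableOn ℂ G Ω)
    (hnorm : ∀ z ∈ Ω, ‖F z‖ ^ 2 = ‖G z‖ ^ 2) :
    ∃ U : EuclideanSpace ℂ (Fin N) ≃ₗᵢ[ℂ] EuclideanSpace ℂ (Fin N),
      ∀ z ∈ Ω, F z = U (G z) := by
  obtain ⟨U, hU⟩ := exists_linearIsometryEquiv_apply_eq_of_inner_eq
    (u := fun z : Ω => G z) (v := fun z : Ω => F z) fun z w =>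
      (inner_eq_inner_of_norm_sq_eq hΩopen hΩconn.isPreconnected hF hG hnorm z.2 w.2).symm
  exact ⟨U, fun z hz => (hU ⟨z, hz⟩).symm⟩

/-- D'Angelo: two holomorphic maps on a connected open set containing `0`
with equal squared norms differ by a unitary transformation of `ℂᴺ`. -/
theorem stmt3 {n N : ℕ} (Ω : Set (EuclideanSpace ℂ (Fin n)))
    (hΩopen : IsOpen Ω) (hΩconn : IsConnected Ω) (hΩ0 : (0 : EuclideanSpace ℂ (Fin n)) ∈ Ω)
    (F G : EuclideanSpace ℂ (Fin n) → EuclideanSpace ℂ (Fin N))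
    (hF : DifferentiableOn ℂ F Ω) (hG : DifferentiableOn ℂ G Ω)
    (hnorm : ∀ z ∈ Ω, ‖F z‖ ^ 2 = ‖G z‖ ^ 2) :
    ∃ U : EuclideanSpace ℂ (Fin N) ≃ₗᵢ[ℂ] EuclideanSpace ℂ (Fin N),
      ∀ z ∈ Ω, F z = U (G z) :=
  stmt3_general Ω hΩopen hΩconn F G hF hG hnorm
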